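/- Let T be a trace, G the graph derived from T, and ≤ any some-schedulable happens-before relation on T. For all events e, f of T with e ≤ f and e ≠ f, the graph G contains a path from e to f through pairwise distinct nodes. -/

import Mathlib

/-- Operations an event can perform: read/write on a shared variable,
    acquire/release on a mutex. Variables and mutexes are named by naturals. -/
inductive Op : Type where
  | read : ℕ → Op
  | write : ℕ → Op
  | acq : ℕ → Op
  | rel : ℕ → Op
deriving DecidableEq

/-- An event carries a thread identifier, a trace position and an operation. -/
structure Event : Type where
  tid : ℕ
  pos : ℕ
  op : Op
deriving DecidableEq

/-- A trace is well formed if the recorded position of each event equals its index. -/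
def WellFormed (T : List Event) : Prop :=
  ∀ i : Fin T.length, (T.get i).pos = (i : ℕ)

/-- Program-order edge: same thread, earlier position. -/
def POEdge (T : List Event) (e f : Event) : Prop :=
  e ∈ T ∧ f ∈ T ∧ e.tid = f.tid ∧ e.pos < f.pos

/-- Release-acquire edge: a release of mutex `y` before an acquire of `y` in another
    thread, with no intervening acquire of `y` by a thread other than the releasing one. -/
def RADEdge (T : List Event) (e f : Event) : Prop :=
  e ∈ T ∧ f ∈ T ∧ ∃ y, e.op = Op.rel y ∧ f.op = Op.acq y ∧
    e.tid ≠ f.tid ∧ e.pos < f.pos ∧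
    ∀ g ∈ T, e.pos < g.pos → g.pos < f.pos → g.tid ≠ e.tid → g.op ≠ Op.acq y

/-- The happens-before relation: smallest (strict) partial order containing PO and RAD,
    i.e. the transitive closure of the PO and RAD edges. -/
def HB (T : List Event) : Event → Event → Prop :=
  Relation.TransGen (fun e f => POEdge T e f ∨ RADEdge T e f)

/-- Two events are unsynchronized if neither happens before the other. -/
def Unsync (T : List Event) (e f : Event) : Prop := ¬ HB T e f ∧ ¬ HB T f e

/-- Unsynchronized WRD candidates for the read `r` on variable `x`. -/
def W1 (T : List Event) (x : ℕ) (r : Event) : Set Event :=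
  {w | w ∈ T ∧ w.op = Op.write x ∧ Unsync T r w ∧
    ∀ w' ∈ T, w' ≠ w → w'.op = Op.write x → Unsync T r w' → ¬ HB T w w'}

/-- Synchronized WRD candidates for the read `r` on variable `x`. -/
def W2 (T : List Event) (x : ℕ) (r : Event) : Set Event :=
  {w | w ∈ T ∧ w.op = Op.write x ∧ HB T w r ∧
    ∀ w' ∈ T, w' ≠ w → w'.op = Op.write x → HB T w' r → ¬ HB T w w'}

/-- All WRD candidates. -/
def Wcand (T : List Event) (x : ℕ) (r : Event) : Set Event :=
  W1 T x r ∪ W2 T x r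

/-- Write-read dependency edge: the nearest preceding write on the same variable. -/
def WRDEdge (T : List Event) (w r : Event) : Prop :=
  w ∈ T ∧ r ∈ T ∧ ∃ x, w.op = Op.write x ∧ r.op = Op.read x ∧ w.pos < r.pos ∧
    ∀ g ∈ T, w.pos < g.pos → g.pos < r.pos → g.op ≠ Op.write x

/-- The schedulable happens-before relation: smallest partial order containing
    PO, RAD and WRD edges. -/
def SHB (T : List Event) : Event → Event → Prop :=
  Relation.TransGen (fun e f => POEdge T e f ∨ RADEdge T e f ∨ WRDEdge T e f)

/-- Every read event enjoys an initial write. -/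
def InitialWrites (T : List Event) : Prop :=
  ∀ r ∈ T, ∀ x, r.op = Op.read x → (W2 T x r).Nonempty

/-- A some-schedulable happens-before relation: any (strict) partial order satisfying
    PO and RAD such that every read is preceded by some of its WRD candidates. -/
structure SomeSHB (T : List Event) (R : Event → Event → Prop) : Prop where
  trans : ∀ {a b c : Event}, R a b → R b c → R a c
  irrefl : ∀ a : Event, ¬ R a a
  po : ∀ {e f : Event}, POEdge T e f → R e f
  rad : ∀ {e f : Event}, RADEdge T e f → R e f
  wrd : ∀ r ∈ T, ∀ x, r.op = Op.read x → ∃ w ∈ Wcand T x r, R w r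

/-- A WRD-candidate edge of the graph derived from `T` (labelled `W(r)`). -/
def CandEdge (T : List Event) (w r : Event) : Prop :=
  r ∈ T ∧ ∃ x, r.op = Op.read x ∧ w ∈ Wcand T x r

/-- An edge of the graph derived from `T`: an HB edge or a WRD-candidate edge. -/
def GEdge (T : List Event) (e f : Event) : Prop :=
  HB T e f ∨ CandEdge T e f

/-- A path in the graph derived from `T`: a nonempty sequence of edges
    visiting pairwise distinct nodes. -/
def GPath (T : List Event) (e f : Event) : Prop :=
  ∃ (n : ℕ) (p : Fin (n + 1) → Event), 0 < n ∧ Function.Injective p ∧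
    p 0 = e ∧ p (Fin.last n) = f ∧
    ∀ i : Fin n, GEdge T (p i.castSucc) (p i.succ)

/-- A some-schedulable happens-before relation in the "generated" sense of CONTEXT 11:
    the smallest partial order containing the PO edges, the RAD edges, and one chosen
    WRD-candidate edge `c r → r` for every read `r`. -/
def SomeSHBgen (T : List Event) (R : Event → Event → Prop) : Prop :=
  ∃ c : Event → Event,
    (∀ r ∈ T, ∀ x, r.op = Op.read x → c r ∈ Wcand T x r) ∧
    R = Relation.TransGen (fun a b => POEdge T a b ∨ RADEdge T a b ∨
          (b ∈ T ∧ (∃ x, b.op = Op.read x) ∧ a = c b)) ∧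
    (∀ a : Event, ¬ R a a)

/-!
The relation `R` is the transitive closure of its generating edges, and each generating edge
is an edge of `G`: PO and RAD edges are `HB` edges, and the chosen edge `c r → r` is a
WRD-candidate edge. So `R e f` unfolds to a chain of `G`-edges from `e` to `f`. Any two nodes
of this chain are `R`-related, so irreflexivity of `R` makes them pairwise distinct.
-/

namespace Relation.TransGen

variable {α : Type*} {r : α → α → Prop}

theorem exists_fin_chain {a b : α} (h : TransGen r a b) :
    ∃ (n : ℕ) (p : Fin (n + 1) → α), 0 < n ∧ p 0 = a ∧ p (Fin.last n) = b ∧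
      ∀ i : Fin n, r (p i.castSucc) (p i.succ) := by
  induction h using TransGen.head_induction_on with
  | @single a hab => exact ⟨1, ![a, b], one_pos, rfl, rfl, fun i => by fin_cases i; exact hab⟩
  | @head a c hac _ ih =>
    obtain ⟨n, p, hn, hp0, hpn, hstep⟩ := ih
    refine ⟨n + 1, Fin.cons a p, n.succ_pos, rfl, by simpa using hpn, Fin.cases ?_ fun i => ?_⟩
    · simpa [hp0] using hac
    · simpa using hstep i

theorem of_fin_chain {n : ℕ} {p : Fin (n + 1) → α}
    (hp : ∀ i : Fin n, r (p i.castSucc) (p i.succ)) {i j : Fin (n + 1)} (hij : i < j) :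
    TransGen r (p i) (p j) := by
  induction j using Fin.induction generalizing i with
  | zero => exact absurd hij (Fin.not_lt_zero _)
  | succ k ih =>
    rcases (Fin.le_castSucc_iff.mpr hij).lt_or_eq with hik | rfl
    · exact (ih hik).tail (hp k)
    · exact single (hp k)

theorem injective_of_fin_chain (hirr : ∀ a, ¬ TransGen r a a) {n : ℕ} {p : Fin (n + 1) → α}
    (hp : ∀ i : Fin n, r (p i.castSucc) (p i.succ)) : Function.Injective p := by
  intro i j hij
  by_contra hne
  rcases lt_or_gt_of_ne hne with h | h
  · exact hirr (p j) (by simpa only [hij] using of_fin_chain hp h)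
  · exact hirr (p i) (by simpa only [hij] using of_fin_chain hp h)

end Relation.TransGen

theorem gEdge_of_someSHBgen_generator {T : List Event} {c : Event → Event}
    (hc : ∀ r ∈ T, ∀ x, r.op = Op.read x → c r ∈ Wcand T x r) {a b : Event}
    (hab : POEdge T a b ∨ RADEdge T a b ∨ (b ∈ T ∧ (∃ x, b.op = Op.read x) ∧ a = c b)) :
    GEdge T a b := by
  rcases hab with h | h | ⟨hbT, ⟨x, hx⟩, rfl⟩
  · exact Or.inl (.single (Or.inl h))
  · exact Or.inl (.single (Or.inr h))
  · exact Or.inr ⟨hbT, x, hx, hc b hbT x hx⟩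

theorem stmt11_general (T : List Event) (R : Event → Event → Prop)
    (hR : SomeSHBgen T R) :
    ∀ e f : Event, R e f → e ≠ f → GPath T e f := by
  obtain ⟨c, hc, rfl, hirr⟩ := hR
  intro e f hef _
  obtain ⟨n, p, hn, hp0, hpn, hstep⟩ := hef.exists_fin_chain
  exact ⟨n, p, hn, Relation.TransGen.injective_of_fin_chain hirr hstep, hp0, hpn,
    fun i => gEdge_of_someSHBgen_generator hc (hstep i)⟩

/-- for any some-schedulable happens-before relation `R` of `T` and any
    events `e ≤ f` with `e ≠ f`, the graph derived from `T` contains a path from `e`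
    to `f` through pairwise distinct nodes. -/
theorem stmt11 (T : List Event) (hwf : WellFormed T) (R : Event → Event → Prop)
    (hR : SomeSHBgen T R) :
    ∀ e f : Event, R e f → e ≠ f → GPath T e f :=
  stmt11_general T R hR
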